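/- If f : ℝ^d → ℝ is differentiable with L₁-Lipschitz gradient, then the Gaussian smoothing f_ν is differentiable with ∇f_ν(x) = E_{v}[∇f(x + ν v)], and ∇f_ν is L₁-Lipschitz. -/

import Mathlib

open MeasureTheory ProbabilityTheory

noncomputable def stdGaussian (d : ℕ) : Measure (EuclideanSpace ℝ (Fin d)) :=
  (Measure.pi fun _ : Fin d => gaussianReal 0 1).map
    (EuclideanSpace.equiv (Fin d) ℝ).symm

open Metric NNReal

/-! Since `∇f` is Lipschitz, `‖∇f (x + v)‖` grows at most linearly and `|f (x + v)|` at most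
quadratically in `‖v‖`. A Gaussian vector has a finite second moment, so both are integrable against
it, and the linear bound on `∇f (z + v)` is uniform for `z` near `x`; differentiating under the
integral sign gives `∇f_ν x = E[∇f (x + ν v)]`. Averaging
`‖∇f (y + ν v) - ∇f (x + ν v)‖ ≤ L₁ ‖y - x‖` over `v` shows that `∇f_ν` is `L₁`-Lipschitz. -/

theorem stdGaussian_eq_stdGaussian_euclideanSpace (d : ℕ) :
    stdGaussian d = ProbabilityTheory.stdGaussian (EuclideanSpace ℝ (Fin d)) := by
  rw [← map_pi_eq_stdGaussian]
  rfl

instance (d : ℕ) : IsGaussian (stdGaussian d) := by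
  rw [stdGaussian_eq_stdGaussian_euclideanSpace]
  infer_instance

section Smoothing

variable {Ω E F : Type*} [MeasurableSpace Ω] {μ : Measure Ω}
  [NormedAddCommGroup E] [NormedAddCommGroup F] {X : Ω → E} {K : ℝ≥0}

theorem LipschitzWith.norm_le_norm_add_mul {g : E → F} (hg : LipschitzWith K g) (x z : E) :
    ‖g z‖ ≤ ‖g x‖ + K * ‖z - x‖ :=
  (norm_le_norm_add_norm_sub' _ _).trans (by gcongr; exact hg.norm_sub_le z x)

theorem LipschitzWith.integrable_comp_add [IsFiniteMeasure μ] {g : E → F}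
    (hg : LipschitzWith K g) (hX : Integrable X μ) (x : E) :
    Integrable (fun ω => g (x + X ω)) μ := by
  refine ((integrable_const ‖g x‖).add (hX.norm.const_mul K)).mono'
    (hg.continuous.comp_aestronglyMeasurable (hX.1.const_add x))
    (ae_of_all _ fun ω => by simpa using hg.norm_le_norm_add_mul x (x + X ω))

theorem norm_integral_comp_add_sub_le [IsProbabilityMeasure μ] [NormedSpace ℝ F] {g : E → F}
    {L : ℝ} (hg : ∀ x y, ‖g y - g x‖ ≤ L * ‖y - x‖) {x y : E}
    (hx : Integrable (fun ω => g (x + X ω)) μ) (hy : Integrable (fun ω => g (y + X ω)) μ) :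
    ‖∫ ω, g (y + X ω) ∂μ - ∫ ω, g (x + X ω) ∂μ‖ ≤ L * ‖y - x‖ := by
  rw [← integral_sub hy hx]
  calc ‖∫ ω, (g (y + X ω) - g (x + X ω)) ∂μ‖ ≤ ∫ _, L * ‖y - x‖ ∂μ :=
        norm_integral_le_of_norm_le (integrable_const _)
          (ae_of_all _ fun ω => by simpa using hg (x + X ω) (y + X ω))
    _ = L * ‖y - x‖ := by simp

variable [NormedSpace ℝ E] [NormedSpace ℝ F]

theorem norm_sub_le_of_lipschitzWith_fderiv {f : E → F} (hf : Differentiable ℝ f)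
    (hf' : LipschitzWith K (fderiv ℝ f)) (x v : E) :
    ‖f (x + v) - f x‖ ≤ (‖fderiv ℝ f x‖ + K * ‖v‖) * ‖v‖ := by
  have hbound : ∀ z ∈ closedBall x ‖v‖, ‖fderiv ℝ f z‖ ≤ ‖fderiv ℝ f x‖ + K * ‖v‖ :=
    fun z hz => (hf'.norm_le_norm_add_mul x z).trans (by gcongr; rwa [← dist_eq_norm])
  simpa using (convex_closedBall x ‖v‖).norm_image_sub_le_of_norm_fderiv_le
    (fun z _ => hf z) hbound (mem_closedBall_self (norm_nonneg v))
    (y := x + v) (by simp [dist_eq_norm])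

theorem integrable_comp_add_of_lipschitzWith_fderiv [IsFiniteMeasure μ] {f : E → F}
    (hf : Differentiable ℝ f) (hf' : LipschitzWith K (fderiv ℝ f)) (hX : MemLp X 2 μ) (x : E) :
    Integrable (fun ω => f (x + X ω)) μ := by
  have hX₁ : Integrable (fun ω => ‖X ω‖) μ := (hX.integrable one_le_two).norm
  have hX₂ : Integrable (fun ω => ‖X ω‖ ^ 2) μ := hX.integrable_norm_pow two_ne_zero
  refine (((integrable_const ‖f x‖).add (hX₁.const_mul ‖fderiv ℝ f x‖)).add
    (hX₂.const_mul K)).mono' (hf.continuous.comp_aestronglyMeasurable (hX.1.const_add x))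
    (ae_of_all _ fun ω => ?_)
  have hmvt := norm_sub_le_of_lipschitzWith_fderiv hf hf' x (X ω)
  have htri := norm_le_norm_add_norm_sub' (f (x + X ω)) (f x)
  simp only [Pi.add_apply]
  nlinarith

theorem hasFDerivAt_integral_comp_add [IsFiniteMeasure μ] {f : E → F}
    (hf : Differentiable ℝ f) (hf' : LipschitzWith K (fderiv ℝ f)) (hX : MemLp X 2 μ) (x : E) :
    HasFDerivAt (fun z => ∫ ω, f (z + X ω) ∂μ) (∫ ω, fderiv ℝ f (x + X ω) ∂μ) x := by
  have hX₁ : Integrable (fun ω => ‖X ω‖) μ := (hX.integrable one_le_two).norm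
  have hbound : ∀ ω, ∀ z ∈ ball x 1,
      ‖fderiv ℝ f (z + X ω)‖ ≤ ‖fderiv ℝ f x‖ + K * (‖X ω‖ + 1) := by
    intro ω z hz
    rw [mem_ball, dist_eq_norm] at hz
    refine (hf'.norm_le_norm_add_mul x _).trans ?_
    gcongr
    calc ‖z + X ω - x‖ = ‖X ω + (z - x)‖ := by congr 1; abel
      _ ≤ ‖X ω‖ + 1 := (norm_add_le _ _).trans (by gcongr)
  refine hasFDerivAt_integral_of_dominated_of_fderiv_le (ball_mem_nhds x one_pos)
    (.of_forall fun z => hf.continuous.comp_aestronglyMeasurable (hX.1.const_add z))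
    (integrable_comp_add_of_lipschitzWith_fderiv hf hf' hX x)
    (hf'.continuous.comp_aestronglyMeasurable (hX.1.const_add x))
    (ae_of_all _ hbound)
    ((integrable_const _).add ((hX₁.add (integrable_const 1)).const_mul K))
    (ae_of_all _ fun ω z _ => (hasFDerivAt_comp_add_right (X ω)).2 (hf _).hasFDerivAt)

end Smoothing

section Gradient

variable {Ω E : Type*} [MeasurableSpace Ω] {μ : Measure Ω}
  [NormedAddCommGroup E] [InnerProductSpace ℝ E] [CompleteSpace E] {X : Ω → E} {K : ℝ≥0}

open InnerProductSpace in
theorem hasGradientAt_integral_comp_add [IsFiniteMeasure μ] {f : E → ℝ}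
    (hf : Differentiable ℝ f) (hg : LipschitzWith K (gradient f)) (hX : MemLp X 2 μ) (x : E) :
    HasGradientAt (fun z => ∫ ω, f (z + X ω) ∂μ) (∫ ω, gradient f (x + X ω) ∂μ) x := by
  have hfderiv : fderiv ℝ f = toDual ℝ E ∘ gradient f :=
    funext fun z => ((toDual ℝ E).apply_symm_apply _).symm
  have hf' : LipschitzWith K (fderiv ℝ f) := by
    rw [hfderiv]
    simpa using (toDual ℝ E).lipschitz.comp hg
  have hint : ∫ ω, fderiv ℝ f (x + X ω) ∂μ = toDual ℝ E (∫ ω, gradient f (x + X ω) ∂μ) := by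
    rw [hfderiv]
    exact (toDual ℝ E).toLinearIsometry.integral_comp_comm _
  rw [hasGradientAt_iff_hasFDerivAt, ← hint]
  exact hasFDerivAt_integral_comp_add hf hf' hX x

end Gradient

theorem gaussian_smoothing_gradient_general
    (d : ℕ) (f : EuclideanSpace ℝ (Fin d) → ℝ) (L₁ : ℝ)
    (hdiff : Differentiable ℝ f)
    (hgrad : ∀ x y, ‖gradient f y - gradient f x‖ ≤ L₁ * ‖y - x‖)
    (ν : ℝ) :
    (∀ x, HasGradientAt (fun z => ∫ v, f (z + ν • v) ∂(stdGaussian d))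
        (∫ v, gradient f (x + ν • v) ∂(stdGaussian d)) x) ∧
    (∀ x y, ‖gradient (fun z => ∫ v, f (z + ν • v) ∂(stdGaussian d)) y -
        gradient (fun z => ∫ v, f (z + ν • v) ∂(stdGaussian d)) x‖ ≤ L₁ * ‖y - x‖) := by
  have hLip : LipschitzWith (Real.toNNReal L₁) (gradient f) :=
    .of_dist_le' fun x y => by simpa only [dist_eq_norm] using hgrad y x
  have hX : MemLp (fun v => ν • v) 2 (stdGaussian d) := IsGaussian.memLp_two_fun_id.const_smul ν
  have hX₁ : Integrable (fun v => ν • v) (stdGaussian d) := hX.integrable one_le_two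
  have hF := hasGradientAt_integral_comp_add hdiff hLip hX
  refine ⟨hF, fun x y => ?_⟩
  rw [(hF y).gradient, (hF x).gradient]
  exact norm_integral_comp_add_sub_le hgrad (hLip.integrable_comp_add hX₁ x)
    (hLip.integrable_comp_add hX₁ y)

/-- if `f` is `C¹` with `L₁`-Lipschitz gradient, its Gaussian
smoothing `f_ν` is differentiable with `∇f_ν(x) = E_v[∇f(x + ν v)]`, and
`∇f_ν` is `L₁`-Lipschitz. -/
theorem gaussian_smoothing_gradient
    (d : ℕ) (f : EuclideanSpace ℝ (Fin d) → ℝ) (L₁ : ℝ)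
    (hdiff : Differentiable ℝ f) (hcont : Continuous (gradient f))
    (hgrad : ∀ x y, ‖gradient f y - gradient f x‖ ≤ L₁ * ‖y - x‖)
    (ν : ℝ) (hν : 0 < ν) :
    (∀ x, HasGradientAt (fun z => ∫ v, f (z + ν • v) ∂(stdGaussian d))
        (∫ v, gradient f (x + ν • v) ∂(stdGaussian d)) x) ∧
    (∀ x y, ‖gradient (fun z => ∫ v, f (z + ν • v) ∂(stdGaussian d)) y -
        gradient (fun z => ∫ v, f (z + ν • v) ∂(stdGaussian d)) x‖ ≤ L₁ * ‖y - x‖) :=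
  gaussian_smoothing_gradient_general d f L₁ hdiff hgrad ν
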